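/- Let T = (T₁,…,Tₙ) be commuting contractions on H and R a positive bounded operator on H. Then R satisfies Tᵢ* R Tᵢ = R for all i if and only if there exist a Hilbert space K, a bounded operator J : H → K, and commuting isometries V₁,…,Vₙ on K such that J* J = R and J Tᵢ = Vᵢ J for all i. -/

import Mathlib

open ContinuousLinearMap Filter Topology
open scoped InnerProductSpace

set_option maxHeartbeats 1000000 in
theorem positive_toeplitz_iff_factorization.{u}
    {H : Type u} [NormedAddCommGroup H] [InnerProductSpace ℂ H] [CompleteSpace H]
    (n : ℕ) (T : Fin n → H →L[ℂ] H)
    (hcomm : ∀ i j, Commute (T i) (T j)) (hcontr : ∀ i, ‖T i‖ ≤ 1)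
    (R : H →L[ℂ] H) (hR : R.IsPositive) :
    (∀ i, adjoint (T i) ∘L R ∘L T i = R) ↔
    ∃ (K : Type u) (_ : NormedAddCommGroup K) (_ : InnerProductSpace ℂ K)
      (_ : CompleteSpace K) (J : H →L[ℂ] K) (V : Fin n → K →L[ℂ] K),
      (∀ i, ∀ x : K, ‖V i x‖ = ‖x‖) ∧
      (∀ i j, Commute (V i) (V j)) ∧
      adjoint J ∘L J = R ∧
      (∀ i, J ∘L T i = V i ∘L J) := by
  constructor
  · intro h
    classical
    have hRpos : (0 : H →L[ℂ] H) ≤ R := (nonneg_iff_isPositive R).mpr hR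
    have hRadj : adjoint R = R := by rw [← star_eq_adjoint]; exact hR.isSelfAdjoint
    set S : H →L[ℂ] H := CFC.sqrt R with hSdef
    have hSnn : (0 : H →L[ℂ] H) ≤ S := CFC.sqrt_nonneg (a := R)
    have hSsa : IsSelfAdjoint S := IsSelfAdjoint.of_nonneg hSnn
    have hSadj : adjoint S = S := by rw [← star_eq_adjoint]; exact hSsa
    have hS2 : ∀ x, S (S x) = R x := by
      intro x
      have hm : S * S = R := CFC.sqrt_mul_sqrt_self R hRpos
      calc S (S x) = (S * S) x := rfl
      _ = R x := by rw [hm]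
    have hinner : ∀ x y : H, ⟪S x, S y⟫_ℂ = ⟪x, R y⟫_ℂ := by
      intro x y
      rw [← adjoint_inner_right S x (S y), hSadj]
      congr 1
      exact hS2 y
    have hkey : ∀ i x, ‖S ((T i) x)‖ = ‖S x‖ := by
      intro i x
      have e1 : ⟪S ((T i) x), S ((T i) x)⟫_ℂ = ⟪S x, S x⟫_ℂ := by
        rw [hinner, hinner]
        rw [← adjoint_inner_right (T i) x (R ((T i) x))]
        congr 1
        calc (adjoint (T i)) (R ((T i) x)) = (adjoint (T i) ∘L R ∘L T i) x := rfl
        _ = R x := by rw [h i]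
      have e3 : ‖S ((T i) x)‖ ^ 2 = ‖S x‖ ^ 2 := by
        rw [← inner_self_eq_norm_sq (𝕜 := ℂ), ← inner_self_eq_norm_sq (𝕜 := ℂ), e1]
      nlinarith [norm_nonneg (S ((T i) x)), norm_nonneg (S x)]
    clear_value S
    -- the spaces
    set SL : H →ₗ[ℂ] H := (S : H →ₗ[ℂ] H) with hSL
    set q : Submodule ℂ H := LinearMap.range SL with hq
    set p : Submodule ℂ H := q.topologicalClosure with hp
    haveI : CompleteSpace p := (Submodule.isClosed_topologicalClosure q).completeSpace_coe
    have hqp : q ≤ p := Submodule.le_topologicalClosure q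
    have hmem : ∀ x : H, S x ∈ p := fun x => hqp ⟨x, rfl⟩
    set J : H →L[ℂ] p := S.codRestrict p hmem with hJ
    set e₀ : q →ₗ[ℂ] p := Submodule.inclusion hqp with he₀
    set e : q →L[ℂ] p := e₀.mkContinuous 1 (fun x => by rw [one_mul]; exact le_of_eq rfl)
      with he
    have henorm : ∀ z : q, ‖e z‖ = ‖z‖ := fun z => rfl
    have he_iso : Isometry e := AddMonoidHomClass.isometry_of_norm e henorm
    have h_e : IsUniformInducing e := he_iso.isUniformInducing
    have h_dense : DenseRange e := by
      intro z
      have hz : (z : H) ∈ closure (q : Set H) := z.2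
      rcases mem_closure_iff_seq_limit.mp hz with ⟨u, hu, hlim⟩
      apply mem_closure_iff_seq_limit.mpr
      refine ⟨fun k => e ⟨u k, hu k⟩, fun k => ⟨_, rfl⟩, ?_⟩
      rw [tendsto_subtype_rng]
      exact hlim
    have hST : ∀ i (x : H), S ((T i) x) ∈ p := fun i x => hmem ((T i) x)
    set ST : Fin n → H →ₗ[ℂ] p := fun i =>
      LinearMap.codRestrict p ((S ∘L T i) : H →ₗ[ℂ] H) (hST i) with hSTdef
    have hker : ∀ i, LinearMap.ker SL ≤ LinearMap.ker (ST i) := by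
      intro i x hx
      have hx0 : S x = 0 := hx
      have h0 : S ((T i) x) = 0 := norm_eq_zero.mp (by rw [hkey i x, hx0, norm_zero])
      apply Subtype.ext
      simpa [hSTdef] using h0
    set E := LinearMap.quotKerEquivRange SL with hE
    set f₀ : Fin n → q →ₗ[ℂ] p := fun i =>
      (Submodule.liftQ (LinearMap.ker SL) (ST i) (hker i)).comp E.symm.toLinearMap with hf₀
    have hf₀eval : ∀ i (x : H) (hx : SL x ∈ q), f₀ i ⟨SL x, hx⟩ = ST i x := by
      intro i x hx
      have h1 : E.symm ⟨SL x, hx⟩ = Submodule.Quotient.mk x := by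
        rw [LinearEquiv.symm_apply_eq]
        exact Subtype.ext rfl
      simp only [hf₀, LinearMap.comp_apply, LinearEquiv.coe_toLinearMap, h1,
        Submodule.liftQ_apply]
    have hf₀norm : ∀ i (z : q), ‖f₀ i z‖ = ‖z‖ := by
      rintro i ⟨v, x, rfl⟩
      rw [hf₀eval i x ⟨x, rfl⟩]
      exact hkey i x
    set f : Fin n → q →L[ℂ] p := fun i =>
      (f₀ i).mkContinuous 1 (fun z => by rw [hf₀norm i z, one_mul]) with hf
    set V : Fin n → p →L[ℂ] p := fun i => (f i).extend e with hV
    have hVe : ∀ i (w : q), V i (e w) = f₀ i w := fun i w => extend_eq (f i) h_dense h_e w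
    have hJe : ∀ (x : H) (hx : SL x ∈ q), e ⟨SL x, hx⟩ = J x := fun x hx => Subtype.ext rfl
    have hVJ : ∀ i (x : H), V i (J x) = J ((T i) x) := by
      intro i x
      rw [← hJe x ⟨x, rfl⟩, hVe i _, hf₀eval i x ⟨x, rfl⟩]
      exact Subtype.ext rfl
    have hVnorm : ∀ i (z : p), ‖V i z‖ = ‖z‖ := by
      intro i z
      refine DenseRange.induction_on h_dense z ?_ ?_
      · exact isClosed_eq (continuous_norm.comp (V i).continuous) continuous_norm
      · intro w
        rw [hVe i w, hf₀norm i w, henorm w]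
    refine ⟨p, inferInstance, inferInstance, inferInstance, J, V, hVnorm, ?_, ?_, ?_⟩
    · intro i j
      ext z
      rw [ContinuousLinearMap.mul_apply, ContinuousLinearMap.mul_apply]
      congr 1
      refine DenseRange.induction_on h_dense z ?_ ?_
      · exact isClosed_eq ((V i).continuous.comp (V j).continuous)
          ((V j).continuous.comp (V i).continuous)
      · rintro ⟨v, x, rfl⟩
        rw [hJe x ⟨x, rfl⟩, hVJ j x, hVJ i ((T j) x), hVJ i x, hVJ j ((T i) x)]
        congr 1
        calc (T i) ((T j) x) = ((T i) * (T j)) x := rfl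
        _ = ((T j) * (T i)) x := by rw [hcomm i j]
        _ = (T j) ((T i) x) := rfl
    · ext x
      apply ext_inner_right ℂ
      intro y
      rw [comp_apply, adjoint_inner_left, Submodule.coe_inner]
      show ⟪S x, S y⟫_ℂ = ⟪R x, y⟫_ℂ
      rw [hinner, ← hRadj, adjoint_inner_left, hRadj]
    · intro i
      ext x
      rw [ContinuousLinearMap.comp_apply, ContinuousLinearMap.comp_apply]
      exact congrArg Subtype.val (hVJ i x).symm
  · rintro ⟨K, _, _, _, J, V, hViso, -, hJJ, hJT⟩ i
    ext x
    apply ext_inner_right ℂ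
    intro y
    have hVinner : ∀ (a b : K), ⟪V i a, V i b⟫_ℂ = ⟪a, b⟫_ℂ := by
      intro a b
      exact LinearIsometry.inner_map_map ⟨(V i).toLinearMap, hViso i⟩ a b
    have hJinner : ∀ (a b : H), ⟪J a, J b⟫_ℂ = ⟪R a, b⟫_ℂ := by
      intro a b
      rw [← hJJ, comp_apply, adjoint_inner_left]
    have hJT' : ∀ (a : H), J ((T i) a) = V i (J a) := by
      intro a
      have := congrArg (fun (A : H →L[ℂ] K) => A a) (hJT i)
      simpa using this
    calc ⟪(adjoint (T i) ∘L R ∘L T i) x, y⟫_ℂ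
        = ⟪R ((T i) x), (T i) y⟫_ℂ := by rw [comp_apply, comp_apply, adjoint_inner_left]
      _ = ⟪J ((T i) x), J ((T i) y)⟫_ℂ := (hJinner _ _).symm
      _ = ⟪V i (J x), V i (J y)⟫_ℂ := by rw [hJT', hJT']
      _ = ⟪J x, J y⟫_ℂ := hVinner _ _
      _ = ⟪R x, y⟫_ℂ := hJinner _ _
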